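/- Let Δ ≥ 2 and let G be a simple graph with no isolated vertices satisfying ν(G) = ⌈Δ/2⌉, Δ(G) = Δ, and |E(G)| = ⌊(2⌈Δ/2⌉+1)·Δ/2⌋. Then for every vertex x of G, ν(G \ x) = ν(G). -/

import Mathlib

open scoped Classical

/-- `M` is a matching of `G`, given as a finite set of edges. -/
def IsMatchingFinset {V : Type*} (G : SimpleGraph V) (M : Finset (Sym2 V)) : Prop :=
  (M : Set (Sym2 V)) ⊆ G.edgeSet ∧
    ∀ e ∈ M, ∀ f ∈ M, e ≠ f → ∀ v : V, ¬(v ∈ e ∧ v ∈ f)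

/-- ν(G): the maximum size of a matching of `G`. -/
noncomputable def matchingNumber {V : Type*} (G : SimpleGraph V) : ℕ :=
  sSup {n | ∃ M : Finset (Sym2 V), IsMatchingFinset G M ∧ M.card = n}

/-- A proper edge coloring of `G` using colors `< n`. -/
def IsProperEdgeColoring {V : Type*} (G : SimpleGraph V) (n : ℕ) (c : Sym2 V → ℕ) : Prop :=
  (∀ e ∈ G.edgeSet, c e < n) ∧
    ∀ e ∈ G.edgeSet, ∀ f ∈ G.edgeSet, e ≠ f → (∃ v : V, v ∈ e ∧ v ∈ f) → c e ≠ c f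

/-- χ'(G): the edge chromatic index of `G`. -/
noncomputable def chromaticIndex {V : Type*} (G : SimpleGraph V) : ℕ :=
  sInf {n | ∃ c : Sym2 V → ℕ, IsProperEdgeColoring G n c}

/-- `G` is friendly-edge-colorable: its edge set is partitioned into maximum matchings. -/
noncomputable def Friendly {V : Type*} [Fintype V] (G : SimpleGraph V) : Prop :=
  ∃ P : Finset (Finset (Sym2 V)),
    (∀ M ∈ P, IsMatchingFinset G M ∧ M.card = matchingNumber G) ∧
    (∀ e, e ∈ G.edgeFinset ↔ ∃ M ∈ P, e ∈ M) ∧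
    ∀ M ∈ P, ∀ N ∈ P, M ≠ N → Disjoint M N

/-- The graph `G` with vertex `x` deleted. -/
def delVert {V : Type*} (G : SimpleGraph V) (x : V) : SimpleGraph {v : V // v ≠ x} :=
  G.induce {v : V | v ≠ x}

/-- `G` has a perfect matching. -/
def HasPerfectMatchingFinset {V : Type*} (G : SimpleGraph V) : Prop :=
  ∃ M : Finset (Sym2 V), IsMatchingFinset G M ∧ ∀ v : V, ∃ e ∈ M, v ∈ e

/-- `G` is factor-critical. -/
def FactorCritical {V : Type*} (G : SimpleGraph V) : Prop :=
  G.Connected ∧ ∀ x : V, HasPerfectMatchingFinset (delVert G x)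

/-!
Suppose `ν(G - x) < ν(G) = ⌈Δ/2⌉ =: s`, and let `H` be `G` with the edges at `x` removed, so that
`2 ν(H) < Δ` and `H` has maximum degree at most `Δ`. Any such graph has at most `ν(H) Δ` edges,
by induction on `H`: if some vertex is covered by every maximum matching, delete its edges; if two
non-isolated vertices lie in different components, split `H` between them; otherwise every vertex
is missed by some maximum matching and, by Gallai's lemma, a maximum matching misses at most one
non-isolated vertex, so at most `2ν + 1 ≤ Δ` vertices carry edges, each of degree at most `2ν`.
Hence `|E(G)| ≤ (s - 1) Δ + Δ = s Δ < ⌊(2s + 1) Δ / 2⌋`, a contradiction.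
-/

open Finset SimpleGraph

section

variable {V W : Type*}

noncomputable def matchedVerts (M : Finset (Sym2 V)) : Finset V := M.biUnion Sym2.toFinset

section MatchedVerts

variable {M N : Finset (Sym2 V)} {e : Sym2 V} {v : V}

theorem mem_matchedVerts : v ∈ matchedVerts M ↔ ∃ e ∈ M, v ∈ e := by
  simp [matchedVerts]

theorem matchedVerts_mono (h : M ⊆ N) : matchedVerts M ⊆ matchedVerts N :=
  biUnion_subset_biUnion_of_subset_left _ h

theorem matchedVerts_insert : matchedVerts (insert e M) = e.toFinset ∪ matchedVerts M :=
  biUnion_insert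

theorem card_matchedVerts_le (M : Finset (Sym2 V)) : #(matchedVerts M) ≤ 2 * #M :=
  calc #(matchedVerts M) ≤ ∑ e ∈ M, #e.toFinset := card_biUnion_le
    _ ≤ ∑ _e ∈ M, 2 := sum_le_sum fun e _ => by rw [Sym2.card_toFinset]; split_ifs <;> omega
    _ = 2 * #M := by rw [sum_const, smul_eq_mul, mul_comm]

theorem card_insert_mk_of_notMem_matchedVerts {a b : V} (ha : a ∉ matchedVerts M) :
    #(insert s(a, b) M) = #M + 1 :=
  card_insert_of_notMem fun h => ha (mem_matchedVerts.2 ⟨_, h, Sym2.mem_mk_left a b⟩)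

theorem disjoint_of_disjoint_matchedVerts 
    (h : Disjoint (matchedVerts M) (matchedVerts N)) : Disjoint M N :=
  disjoint_left.2 fun e heM heN => disjoint_left.1 h
    (mem_matchedVerts.2 ⟨e, heM, e.out_fst_mem⟩) (mem_matchedVerts.2 ⟨e, heN, e.out_fst_mem⟩)

end MatchedVerts

theorem isMatchingFinset_empty (G : SimpleGraph V) : IsMatchingFinset G ∅ :=
  ⟨by simp, by simp⟩

namespace IsMatchingFinset

variable {G G' : SimpleGraph V} {M N : Finset (Sym2 V)} {e f : Sym2 V} {a b v : V}

theorem mono (hM : IsMatchingFinset G M) (h : G ≤ G') : IsMatchingFinset G' M :=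
  ⟨hM.1.trans (edgeSet_mono h), hM.2⟩

theorem subset (hM : IsMatchingFinset G M) (h : N ⊆ M) : IsMatchingFinset G N :=
  ⟨(coe_subset.2 h).trans hM.1, fun e he f hf => hM.2 e (h he) f (h hf)⟩

theorem eq_of_mem (hM : IsMatchingFinset G M) (he : e ∈ M) (hf : f ∈ M) (hve : v ∈ e)
    (hvf : v ∈ f) : e = f :=
  of_not_not fun hne => hM.2 e he f hf hne v ⟨hve, hvf⟩

theorem notMem_matchedVerts_erase (hM : IsMatchingFinset G M) (he : e ∈ M) (hv : v ∈ e) :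
    v ∉ matchedVerts (M.erase e) := by
  rw [mem_matchedVerts]
  rintro ⟨f, hf, hvf⟩
  exact ne_of_mem_erase hf (hM.eq_of_mem (mem_of_mem_erase hf) he hvf hv)

theorem insert (hM : IsMatchingFinset G M) (hab : G.Adj a b) (ha : a ∉ matchedVerts M)
    (hb : b ∉ matchedVerts M) : IsMatchingFinset G (insert s(a, b) M) := by
  have hfree : ∀ v ∈ s(a, b), ∀ f ∈ M, v ∉ f := by
    rintro v hv f hf hvf
    rcases Sym2.mem_iff.1 hv with rfl | rfl
    exacts [ha (mem_matchedVerts.2 ⟨f, hf, hvf⟩), hb (mem_matchedVerts.2 ⟨f, hf, hvf⟩)]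
  refine ⟨?_, ?_⟩
  · rw [coe_insert]
    exact Set.insert_subset hab hM.1
  · intro e he f hf hne v ⟨hve, hvf⟩
    rcases mem_insert.1 he with rfl | he <;> rcases mem_insert.1 hf with rfl | hf
    exacts [hne rfl, hfree v hve f hf hvf, hfree v hvf e he hve, hM.2 e he f hf hne v ⟨hve, hvf⟩]

theorem mem_matchedVerts_of_adj {s : ℕ} (hM : IsMatchingFinset G M)
    (hmax : ∀ K, IsMatchingFinset G K → #K ≤ s) (hMs : #M = s) (hab : G.Adj a b)
    (ha : a ∉ matchedVerts M) : b ∈ matchedVerts M := by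
  by_contra hb
  have := hmax _ (hM.insert hab ha hb)
  rw [card_insert_mk_of_notMem_matchedVerts ha] at this
  omega

theorem deleteIncidenceSet (hM : IsMatchingFinset G M) (hv : v ∉ matchedVerts M) :
    IsMatchingFinset (G.deleteIncidenceSet v) M := by
  refine ⟨fun e he => ?_, hM.2⟩
  rw [edgeSet_deleteIncidenceSet]
  exact ⟨hM.1 he, fun h => hv (mem_matchedVerts.2 ⟨e, he, h.2⟩)⟩

theorem notMem_matchedVerts (hM : IsMatchingFinset (G.deleteIncidenceSet v) M) :
    v ∉ matchedVerts M := by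
  rw [mem_matchedVerts]
  rintro ⟨e, he, hve⟩
  have := hM.1 he
  rw [edgeSet_deleteIncidenceSet] at this
  exact this.2 ⟨this.1, hve⟩

theorem union (h₁ : IsMatchingFinset G M) (h₂ : IsMatchingFinset G N)
    (hMN : Disjoint (matchedVerts M) (matchedVerts N)) : IsMatchingFinset G (M ∪ N) := by
  have hcross : ∀ e ∈ M, ∀ f ∈ N, ∀ v, ¬(v ∈ e ∧ v ∈ f) := fun e he f hf v hv =>
    disjoint_left.1 hMN (mem_matchedVerts.2 ⟨e, he, hv.1⟩) (mem_matchedVerts.2 ⟨f, hf, hv.2⟩)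
  refine ⟨by rw [coe_union]; exact Set.union_subset h₁.1 h₂.1, ?_⟩
  intro e he f hf hne v hv
  rcases mem_union.1 he with he | he <;> rcases mem_union.1 hf with hf | hf
  exacts [h₁.2 e he f hf hne v hv, hcross e he f hf v hv, hcross f hf e he v hv.symm,
    h₂.2 e he f hf hne v hv]

theorem map {G' : SimpleGraph W} (hM : IsMatchingFinset G M) (φ : G ↪g G') :
    IsMatchingFinset G' (M.image (Sym2.map φ)) := by
  refine ⟨?_, ?_⟩
  · intro e' he'
    obtain ⟨e, he, rfl⟩ := mem_image.1 he'
    exact φ.toHom.map_mem_edgeSet (hM.1 he)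
  · intro e' he' f' hf' hne v ⟨hve, hvf⟩
    obtain ⟨e, he, rfl⟩ := mem_image.1 he'
    obtain ⟨f, hf, rfl⟩ := mem_image.1 hf'
    obtain ⟨a, ha, rfl⟩ := Sym2.mem_map.1 hve
    obtain ⟨b, hb, hab⟩ := Sym2.mem_map.1 hvf
    cases φ.injective hab
    exact hne (congrArg _ (hM.eq_of_mem he hf ha hb))

theorem preimage {G : SimpleGraph W} {M : Finset (Sym2 W)} (hM : IsMatchingFinset G M)
    (φ : G' ↪g G) :
    IsMatchingFinset G' (M.preimage (Sym2.map φ) (Sym2.map.injective φ.injective).injOn) := by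
  refine ⟨?_, ?_⟩
  · intro e he
    induction e using Sym2.ind with
    | _ a b => exact φ.map_adj_iff.1 (hM.1 (mem_preimage.1 he))
  · intro e he f hf hne v ⟨hve, hvf⟩
    exact hM.2 _ (mem_preimage.1 he) _ (mem_preimage.1 hf)
      ((Sym2.map.injective φ.injective).ne hne) (φ v)
      ⟨Sym2.mem_map.2 ⟨v, hve, rfl⟩, Sym2.mem_map.2 ⟨v, hvf, rfl⟩⟩

end IsMatchingFinset

section MatchingNumber

variable [Fintype V] {G G' : SimpleGraph V} {M : Finset (Sym2 V)}

theorem bddAbove_matchingSizes (G : SimpleGraph V) :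
    BddAbove {n | ∃ M : Finset (Sym2 V), IsMatchingFinset G M ∧ #M = n} :=
  ⟨Fintype.card (Sym2 V), by rintro n ⟨M, -, rfl⟩; exact card_le_univ M⟩

theorem IsMatchingFinset.card_le_matchingNumber (hM : IsMatchingFinset G M) :
    #M ≤ matchingNumber G :=
  le_csSup (bddAbove_matchingSizes G) ⟨M, hM, rfl⟩

theorem exists_isMatchingFinset_card_eq_matchingNumber (G : SimpleGraph V) :
    ∃ M, IsMatchingFinset G M ∧ #M = matchingNumber G := by
  refine Nat.sSup_mem ?_ (bddAbove_matchingSizes G)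
  exact ⟨0, ∅, isMatchingFinset_empty G, rfl⟩

theorem matchingNumber_mono (h : G ≤ G') : matchingNumber G ≤ matchingNumber G' := by
  obtain ⟨M, hM, hMc⟩ := exists_isMatchingFinset_card_eq_matchingNumber G
  exact hMc ▸ (hM.mono h).card_le_matchingNumber

theorem exists_isMatchingFinset_notMem_matchedVerts_of_le
    (h : matchingNumber G ≤ matchingNumber (G.deleteIncidenceSet v)) :
    ∃ M, IsMatchingFinset G M ∧ #M = matchingNumber G ∧ v ∉ matchedVerts M := by
  obtain ⟨M, hM, hMc⟩ := exists_isMatchingFinset_card_eq_matchingNumber (G.deleteIncidenceSet v)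
  have hMG := hM.mono (deleteIncidenceSet_le G v)
  exact ⟨M, hMG, le_antisymm hMG.card_le_matchingNumber (hMc ▸ h), hM.notMem_matchedVerts⟩

theorem matchingNumber_induce_of_support_subset {s : Set V} (h : G.support ⊆ s) :
    matchingNumber (G.induce s) = matchingNumber G := by
  refine le_antisymm ?_ ?_
  · obtain ⟨M, hM, hMc⟩ := exists_isMatchingFinset_card_eq_matchingNumber (G.induce s)
    rw [← hMc, ← card_image_of_injective M (Sym2.map.injective Subtype.val_injective)]
    exact (hM.map (Embedding.induce s)).card_le_matchingNumber
  · obtain ⟨M, hM, hMc⟩ := exists_isMatchingFinset_card_eq_matchingNumber G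
    have hinj : Function.Injective (Sym2.map ((↑) : s → V)) :=
      Sym2.map.injective Subtype.val_injective
    have hrange : ∀ e ∈ M, e ∈ Set.range (Sym2.map ((↑) : s → V)) := by
      intro e he
      induction e using Sym2.ind with
      | _ a b =>
        have hab : G.Adj a b := hM.1 he
        exact ⟨s(⟨a, h hab.left_mem_support⟩, ⟨b, h hab.right_mem_support⟩), rfl⟩
    have himage : (M.preimage _ hinj.injOn).image (Sym2.map ((↑) : s → V)) = M := by
      rw [image_preimage, filter_true_of_mem hrange]
    rw [← hMc, ← himage]
    exact card_image_le.trans (hM.preimage (Embedding.induce s)).card_le_matchingNumber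

end MatchingNumber

theorem card_le_of_isMatchingFinset_deleteIncidenceSet {G : SimpleGraph V} {s : ℕ} {a b : V}
    (hmax : ∀ K, IsMatchingFinset G K → #K ≤ s + 1) (hab : G.Adj a b) {K : Finset (Sym2 V)}
    (hK : IsMatchingFinset ((G.deleteIncidenceSet a).deleteIncidenceSet b) K) : #K ≤ s := by
  have haK := (hK.mono (deleteIncidenceSet_le _ _)).notMem_matchedVerts
  have := hmax _ ((hK.mono ((deleteIncidenceSet_le _ _).trans (deleteIncidenceSet_le _ _))).insert
    hab haK hK.notMem_matchedVerts)
  rw [card_insert_mk_of_notMem_matchedVerts haK] at this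
  omega

/- `M'` is `M` switched along the `M`-`N`-alternating path starting at `t`, and `y` is the other
end of that path. The induction peels off its first two edges `tt₁ ∈ M` and `t₁t₂ ∈ N`. -/
theorem exists_isMatchingFinset_swap {H : SimpleGraph V} {s : ℕ}
    (hmax : ∀ K, IsMatchingFinset H K → #K ≤ s) {M N : Finset (Sym2 V)}
    (hM : IsMatchingFinset H M) (hN : IsMatchingFinset H N) (hMs : #M = s) (hNs : #N = s)
    {t : V} (htN : t ∉ matchedVerts N) :
    ∃ M' y, IsMatchingFinset H M' ∧ #M' = s ∧ t ∉ matchedVerts M' ∧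
      insert t (matchedVerts M') = insert y (matchedVerts M) := by
  induction s generalizing H M N t with
  | zero => exact ⟨M, t, hM, hMs, by simp [card_eq_zero.1 hMs, matchedVerts], rfl⟩
  | succ s ih =>
    by_cases htM : t ∉ matchedVerts M
    · exact ⟨M, t, hM, hMs, htM, rfl⟩
    obtain ⟨e, he, hte⟩ := mem_matchedVerts.1 (not_not.1 htM)
    obtain ⟨t₁, rfl⟩ := Sym2.mem_iff_exists.1 hte
    have hadj : H.Adj t t₁ := hM.1 he
    obtain ⟨f, hf, ht₁f⟩ := mem_matchedVerts.1 (hN.mem_matchedVerts_of_adj hmax hNs hadj htN)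
    obtain ⟨t₂, rfl⟩ := Sym2.mem_iff_exists.1 ht₁f
    have hadj₂ : H.Adj t₁ t₂ := hN.1 hf
    set H' := (H.deleteIncidenceSet t).deleteIncidenceSet t₁
    have hH' : H' ≤ H := (deleteIncidenceSet_le _ _).trans (deleteIncidenceSet_le _ _)
    have hmax' : ∀ K, IsMatchingFinset H' K → #K ≤ s := fun K hK =>
      card_le_of_isMatchingFinset_deleteIncidenceSet hmax hadj hK
    have hM₁ : IsMatchingFinset H' (M.erase s(t, t₁)) :=
      ((hM.subset (erase_subset _ _)).deleteIncidenceSet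
        (hM.notMem_matchedVerts_erase he (Sym2.mem_mk_left _ _))).deleteIncidenceSet
        (hM.notMem_matchedVerts_erase he (Sym2.mem_mk_right _ _))
    have hN₁ : IsMatchingFinset H' (N.erase s(t₁, t₂)) :=
      ((hN.subset (erase_subset _ _)).deleteIncidenceSet
        fun h => htN (matchedVerts_mono (erase_subset _ _) h)).deleteIncidenceSet
        (hN.notMem_matchedVerts_erase hf (Sym2.mem_mk_left _ _))
    obtain ⟨M'', y, hM'', hM''s, ht₂M'', hcov⟩ := ih hmax' hM₁ hN₁
      (by rw [card_erase_of_mem he, hMs]; rfl) (by rw [card_erase_of_mem hf, hNs]; rfl)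
      (hN.notMem_matchedVerts_erase hf (Sym2.mem_mk_right _ _))
    have ht₁M'' : t₁ ∉ matchedVerts M'' := hM''.notMem_matchedVerts
    have htM'' : t ∉ matchedVerts M'' := (hM''.mono (deleteIncidenceSet_le _ _)).notMem_matchedVerts
    have ht₂ : t₂ ≠ t := fun h => htN (mem_matchedVerts.2 ⟨_, hf, h ▸ Sym2.mem_mk_right _ _⟩)
    refine ⟨insert s(t₁, t₂) M'', y, (hM''.mono hH').insert hadj₂ ht₁M'' ht₂M'', ?_, ?_, ?_⟩
    · rw [card_insert_mk_of_notMem_matchedVerts ht₁M'', hM''s]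
    · rw [matchedVerts_insert, Sym2.toFinset_mk_eq]
      simp only [mem_union, mem_insert, mem_singleton, not_or]
      exact ⟨⟨hadj.ne, ht₂.symm⟩, htM''⟩
    · rw [← insert_erase he, matchedVerts_insert, matchedVerts_insert, Sym2.toFinset_mk_eq,
        Sym2.toFinset_mk_eq]
      ext v
      have := Finset.ext_iff.1 hcov v
      simp only [mem_union, mem_insert, mem_singleton] at this ⊢
      tauto

/- Gallai's lemma. Exposing the neighbour `t` of `u` on a shortest path from `u` to `w` costs at
most one of `u`, `w`, which leaves an exposed pair at smaller distance. -/
theorem not_reachable_of_notMem_matchedVerts {H : SimpleGraph V} {s : ℕ}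
    (hmax : ∀ K, IsMatchingFinset H K → #K ≤ s)
    (havoid : ∀ v, ∃ N, IsMatchingFinset H N ∧ #N = s ∧ v ∉ matchedVerts N)
    {M : Finset (Sym2 V)} (hM : IsMatchingFinset H M) (hMs : #M = s) {u w : V} (huw : u ≠ w)
    (hu : u ∉ matchedVerts M) (hw : w ∉ matchedVerts M) : ¬H.Reachable u w := by
  intro hr
  induction hd : H.dist u w using Nat.strong_induction_on generalizing M u w with
  | _ d ih =>
  by_cases hadj : H.Adj u w
  · exact hw (hM.mem_matchedVerts_of_adj hmax hMs hadj hu)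
  obtain ⟨p, hp⟩ := hr.exists_walk_length_eq_dist
  cases p with
  | nil => exact huw rfl
  | @cons _ t _ hut q =>
    have hd1 : 1 < d := hd ▸ hr.one_lt_dist_of_ne_of_not_adj huw hadj
    have htw : H.dist t w < d := by
      have := dist_le q
      rw [Walk.length_cons] at hp
      omega
    obtain ⟨N, hN, hNs, htN⟩ := havoid t
    obtain ⟨M', y, hM', hM's, htM', hcov⟩ := exists_isMatchingFinset_swap hmax hM hN hMs hNs htN
    have hexposed : ∀ v, v ∉ matchedVerts M → v ≠ y → v ∉ matchedVerts M' := by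
      intro v hvM hvy hvM'
      have := hcov ▸ mem_insert_of_mem hvM'
      rw [mem_insert] at this
      tauto
    by_cases hy : u = y
    · exact ih _ htw hM' hM's (fun h : t = w => hadj (h ▸ hut)) htM'
        (hexposed w hw (hy ▸ huw.symm)) q.reachable rfl
    · exact ih _ (by rw [dist_eq_one_iff_adj.2 hut.symm]; exact hd1) hM' hM's hut.ne.symm htM'
        (hexposed u hu hy) hut.symm.reachable rfl

section Counting

variable [Fintype V] {H : SimpleGraph V} [DecidableRel H.Adj]

theorem degree_le_of_notMem_matchedVerts {s : ℕ} (hmax : ∀ K, IsMatchingFinset H K → #K ≤ s)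
    {M : Finset (Sym2 V)} (hM : IsMatchingFinset H M) (hMs : #M = s) {v : V}
    (hv : v ∉ matchedVerts M) : H.degree v ≤ 2 * s := by
  calc H.degree v = #(H.neighborFinset v) := (card_neighborFinset_eq_degree H v).symm
    _ ≤ #(matchedVerts M) := card_le_card fun u hu =>
      hM.mem_matchedVerts_of_adj hmax hMs ((mem_neighborFinset _ _ _).1 hu) hv
    _ ≤ 2 * s := hMs ▸ card_matchedVerts_le M

theorem two_mul_card_edgeFinset_le {k : ℕ} (S : Finset V) (hS : ∀ v, 0 < H.degree v → v ∈ S)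
    (hdeg : ∀ v, H.degree v ≤ k) : 2 * #H.edgeFinset ≤ #S * k := by
  rw [← sum_degrees_eq_twice_card_edges, ← sum_subset (subset_univ S)]
  · simpa using sum_le_card_nsmul S _ k fun v _ => hdeg v
  · intro v _ hv
    by_contra h
    exact hv (hS v (Nat.pos_of_ne_zero h))

theorem card_edgeFinset_le_of_forall_exists_notMem_matchedVerts
    (havoid : ∀ v, ∃ N, IsMatchingFinset H N ∧ #N = matchingNumber H ∧ v ∉ matchedVerts N)
    (hconn : ∀ u w, 0 < H.degree u → 0 < H.degree w → H.Reachable u w) :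
    #H.edgeFinset ≤ matchingNumber H * (2 * matchingNumber H + 1) := by
  set s := matchingNumber H
  have hmax : ∀ K, IsMatchingFinset H K → #K ≤ s := fun K hK => hK.card_le_matchingNumber
  obtain ⟨M, hM, hMs⟩ := exists_isMatchingFinset_card_eq_matchingNumber H
  set P := univ.filter fun v => v ∉ matchedVerts M ∧ 0 < H.degree v
  have hP : #P ≤ 1 := by
    refine card_le_one.2 fun u hu w hw => of_not_not fun huw => ?_
    simp only [P, mem_filter, mem_univ, true_and] at hu hw
    exact not_reachable_of_notMem_matchedVerts hmax havoid hM hMs huw hu.1 hw.1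
      (hconn u w hu.2 hw.2)
  have h2E : 2 * #H.edgeFinset ≤ #(matchedVerts M ∪ P) * (2 * s) := by
    refine two_mul_card_edgeFinset_le _ (fun v hv => ?_) fun v => ?_
    · by_cases hvM : v ∈ matchedVerts M
      · exact mem_union_left _ hvM
      · exact mem_union_right _ (by simp [P, hvM, hv])
    · obtain ⟨N, hN, hNs, hvN⟩ := havoid v
      exact degree_le_of_notMem_matchedVerts hmax hN hNs hvN
  have hcard : #(matchedVerts M ∪ P) ≤ 2 * s + 1 :=
    (card_union_le _ _).trans (by have := card_matchedVerts_le M; omega)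
  nlinarith

end Counting

section Split

variable {H : SimpleGraph V} {S : Set V}

theorem spanningCoe_induce_adj {a b : V} :
    (H.induce S).spanningCoe.Adj a b ↔ H.Adj a b ∧ a ∈ S ∧ b ∈ S := by
  simp only [map_adj, comap_adj, Function.Embedding.coe_subtype]
  constructor
  · rintro ⟨a', b', h, rfl, rfl⟩
    exact ⟨h, a'.2, b'.2⟩
  · rintro ⟨h, ha, hb⟩
    exact ⟨⟨a, ha⟩, ⟨b, hb⟩, h, rfl, rfl⟩

theorem IsMatchingFinset.matchedVerts_subset_of_spanningCoe_induce {M : Finset (Sym2 V)}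
    (hM : IsMatchingFinset (H.induce S).spanningCoe M) : ↑(matchedVerts M) ⊆ S := by
  intro v hv
  obtain ⟨e, he, hve⟩ := mem_matchedVerts.1 hv
  induction e using Sym2.ind with
  | _ a b =>
    have := spanningCoe_induce_adj.1 (hM.1 he)
    rcases Sym2.mem_iff.1 hve with rfl | rfl
    exacts [this.2.1, this.2.2]

theorem card_edgeFinset_eq_add_of_forall_adj [Fintype H.edgeSet] {T : Set V}
    [Fintype (H.induce S).spanningCoe.edgeSet] [Fintype (H.induce T).spanningCoe.edgeSet]
    (hST : Disjoint S T) (hH : ∀ a b, H.Adj a b → a ∈ S ∧ b ∈ S ∨ a ∈ T ∧ b ∈ T) :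
    #H.edgeFinset =
      #(H.induce S).spanningCoe.edgeFinset + #(H.induce T).spanningCoe.edgeFinset := by
  rw [← card_union_of_disjoint]
  · congr 1
    ext e
    induction e using Sym2.ind with
    | _ a b =>
      simp only [mem_union, mem_edgeFinset, mem_edgeSet, spanningCoe_induce_adj]
      have := hH a b
      tauto
  · refine disjoint_left.2 fun e h₁ h₂ => ?_
    induction e using Sym2.ind with
    | _ a b =>
      simp only [mem_edgeFinset, mem_edgeSet, spanningCoe_induce_adj] at h₁ h₂
      exact Set.disjoint_left.1 hST h₁.2.1 h₂.2.1

theorem matchingNumber_add_matchingNumber_le [Fintype V] {T : Set V} (hST : Disjoint S T) :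
    matchingNumber (H.induce S).spanningCoe + matchingNumber (H.induce T).spanningCoe ≤
      matchingNumber H := by
  obtain ⟨M₁, hM₁, hM₁s⟩ := exists_isMatchingFinset_card_eq_matchingNumber (H.induce S).spanningCoe
  obtain ⟨M₂, hM₂, hM₂s⟩ := exists_isMatchingFinset_card_eq_matchingNumber (H.induce T).spanningCoe
  have hdisj : Disjoint (matchedVerts M₁) (matchedVerts M₂) := by
    rw [← disjoint_coe]
    exact Set.disjoint_of_subset hM₁.matchedVerts_subset_of_spanningCoe_induce
      hM₂.matchedVerts_subset_of_spanningCoe_induce hST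
  rw [← hM₁s, ← hM₂s, ← card_union_of_disjoint (disjoint_of_disjoint_matchedVerts hdisj)]
  exact ((hM₁.mono (spanningCoe_induce_le H S)).union (hM₂.mono (spanningCoe_induce_le H T))
    hdisj).card_le_matchingNumber

theorem exists_disjoint_spanningCoe_induce_lt {u w : V} (huw : ¬H.Reachable u w)
    (hu : u ∈ H.support) (hw : w ∈ H.support) :
    ∃ S T : Set V, Disjoint S T ∧ (∀ a b, H.Adj a b → a ∈ S ∧ b ∈ S ∨ a ∈ T ∧ b ∈ T) ∧
      (H.induce S).spanningCoe < H ∧ (H.induce T).spanningCoe < H := by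
  refine ⟨{z | H.Reachable u z}, {z | ¬H.Reachable u z}, Set.disjoint_left.2 fun z h h' => h' h,
    fun a b hab => ?_, (spanningCoe_induce_le H _).lt_of_ne fun h => ?_,
    (spanningCoe_induce_le H _).lt_of_ne fun h => ?_⟩
  · by_cases ha : H.Reachable u a
    · exact .inl ⟨ha, ha.trans hab.reachable⟩
    · exact .inr ⟨ha, fun hb => ha (hb.trans hab.symm.reachable)⟩
  · exact huw ((spanningCoe_induce_eq_self H _).1 h hw)
  · exact (spanningCoe_induce_eq_self H _).1 h hu Reachable.rfl

end Split

section EdgeBound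

variable [Fintype V] {D : ℕ} {H : SimpleGraph V} [DecidableRel H.Adj]

theorem card_edgeFinset_le_of_deleteIncidenceSet {v : V}
    (hv : matchingNumber (H.deleteIncidenceSet v) < matchingNumber H) (hdeg : H.degree v ≤ D)
    (h : #(H.deleteIncidenceSet v).edgeFinset ≤ matchingNumber (H.deleteIncidenceSet v) * D) :
    #H.edgeFinset ≤ matchingNumber H * D := by
  obtain ⟨k, hk⟩ : ∃ k, matchingNumber H = k + 1 := Nat.exists_eq_add_one.2 (by omega)
  have hE := card_edgeFinset_deleteIncidenceSet H v
  have := H.degree_le_card_edgeFinset v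
  calc #H.edgeFinset = #(H.deleteIncidenceSet v).edgeFinset + H.degree v := by omega
    _ ≤ k * D + D := add_le_add (h.trans (Nat.mul_le_mul_right D (by omega))) hdeg
    _ = matchingNumber H * D := by rw [hk, Nat.succ_mul]

theorem card_edgeFinset_le_of_disjoint {S T : Set V} (hST : Disjoint S T)
    (hH : ∀ a b, H.Adj a b → a ∈ S ∧ b ∈ S ∨ a ∈ T ∧ b ∈ T)
    (hS : #(H.induce S).spanningCoe.edgeFinset ≤ matchingNumber (H.induce S).spanningCoe * D)
    (hT : #(H.induce T).spanningCoe.edgeFinset ≤ matchingNumber (H.induce T).spanningCoe * D) :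
    #H.edgeFinset ≤ matchingNumber H * D := by
  rw [card_edgeFinset_eq_add_of_forall_adj hST hH]
  calc _ ≤ matchingNumber (H.induce S).spanningCoe * D +
          matchingNumber (H.induce T).spanningCoe * D := add_le_add hS hT
    _ ≤ matchingNumber H * D := by
      rw [← add_mul]
      exact Nat.mul_le_mul_right D (matchingNumber_add_matchingNumber_le hST)

end EdgeBound

theorem card_edgeFinset_le_matchingNumber_mul [Fintype V] {D : ℕ} (H : SimpleGraph V)
    [inst : DecidableRel H.Adj] (hν : 2 * matchingNumber H < D) (hdeg : ∀ v, H.degree v ≤ D) :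
    #H.edgeFinset ≤ matchingNumber H * D := by
  revert inst hν hdeg
  induction H using WellFoundedLT.induction with
  | _ H ih =>
  intro _ hν hdeg
  have ih' : ∀ H' : SimpleGraph V, [DecidableRel H'.Adj] → H' < H →
      #H'.edgeFinset ≤ matchingNumber H' * D := fun H' _ hlt =>
    ih H' hlt ((Nat.mul_le_mul_left 2 (matchingNumber_mono hlt.le)).trans_lt hν)
      (fun v => (degree_le_of_le hlt.le).trans (hdeg v))
  by_cases hsplit : ∃ u w, 0 < H.degree u ∧ 0 < H.degree w ∧ ¬H.Reachable u w
  · obtain ⟨u, w, hu, hw, huw⟩ := hsplit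
    obtain ⟨S, T, hST, hH, hS, hT⟩ := exists_disjoint_spanningCoe_induce_lt huw
      ((H.degree_pos_iff_mem_support u).1 hu) ((H.degree_pos_iff_mem_support w).1 hw)
    exact card_edgeFinset_le_of_disjoint hST hH (ih' _ hS) (ih' _ hT)
  by_cases hess : ∃ v, matchingNumber (H.deleteIncidenceSet v) < matchingNumber H
  · obtain ⟨v, hv⟩ := hess
    exact card_edgeFinset_le_of_deleteIncidenceSet hv (hdeg v)
      (ih' _ ((deleteIncidenceSet_le H v).lt_of_ne fun h => hv.ne (congrArg matchingNumber h)))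
  push Not at hsplit hess
  calc #H.edgeFinset ≤ matchingNumber H * (2 * matchingNumber H + 1) :=
        card_edgeFinset_le_of_forall_exists_notMem_matchedVerts
          (fun v => exists_isMatchingFinset_notMem_matchedVerts_of_le (hess v)) hsplit
    _ ≤ matchingNumber H * D := Nat.mul_le_mul_left _ hν

theorem matchingNumber_delVert [Fintype V] (G : SimpleGraph V) (x : V) :
    matchingNumber (delVert G x) = matchingNumber (G.deleteIncidenceSet x) := by
  rw [delVert, ← induce_deleteIncidenceSet_of_notMem G (fun h => h rfl : x ∉ {v | v ≠ x})]
  exact matchingNumber_induce_of_support_subset fun v hv =>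
    ((support_deleteIncidenceSet_subset G x) hv).2

end

theorem stmt_2_general {V : Type*} [Fintype V] (G : SimpleGraph V) (Δ : ℕ) (hΔ : 2 ≤ Δ)
    (hν : matchingNumber G = (Δ + 1) / 2)
    (hmax : G.maxDegree = Δ)
    (hE : G.edgeFinset.card = (2 * ((Δ + 1) / 2) + 1) * Δ / 2) :
    ∀ x : V, matchingNumber (delVert G x) = matchingNumber G := by
  intro x
  rw [matchingNumber_delVert]
  refine le_antisymm (matchingNumber_mono (deleteIncidenceSet_le G x)) (not_lt.1 fun hlt => ?_)
  have hdeg : ∀ v, G.degree v ≤ Δ := fun v => hmax ▸ G.degree_le_maxDegree v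
  have hH := card_edgeFinset_le_matchingNumber_mul (G.deleteIncidenceSet x) (D := Δ) (by omega)
    fun v => (degree_le_of_le (deleteIncidenceSet_le G x)).trans (hdeg v)
  have hEH := card_edgeFinset_deleteIncidenceSet G x
  have hdx := hdeg x
  -- `#G.edgeFinset ≤ (ν(G - x) + 1) * Δ ≤ ν(G) * Δ < ν(G) * Δ + Δ / 2`
  have h1 : (matchingNumber (G.deleteIncidenceSet x) + 1) * Δ ≤ (Δ + 1) / 2 * Δ :=
    Nat.mul_le_mul_right Δ (by omega)
  have h2 : (2 * ((Δ + 1) / 2) + 1) * Δ = 2 * ((Δ + 1) / 2 * Δ) + Δ := by ring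
  rw [add_one_mul] at h1
  omega

theorem stmt_2 {V : Type*} [Fintype V] (G : SimpleGraph V) (Δ : ℕ) (hΔ : 2 ≤ Δ)
    (hiso : ∀ v : V, 0 < G.degree v)
    (hν : matchingNumber G = (Δ + 1) / 2)
    (hmax : G.maxDegree = Δ)
    (hE : G.edgeFinset.card = (2 * ((Δ + 1) / 2) + 1) * Δ / 2) :
    ∀ x : V, matchingNumber (delVert G x) = matchingNumber G :=
  stmt_2_general G Δ hΔ hν hmax hE
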